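/- In the Lie algebra 𝔤 with the bracket relations above, let D' = 4D - X_h. Then D' commutes with X_e, X_f, X_h, and the operator ad_{D'} restricted to 𝔫 = span{V_a, Z, P_a, X^i} has eigenspace decomposition span{X^0, Z} ⊕ span{X^a} ⊕ span{V_a, P_a} with respective eigenvalues -3, -2, -1. Consequently tr(ad_{D'}|_𝔫) = -4n - 6 ≠ 0, so the radical 𝔯 = ℝD' ⋉ 𝔫 of 𝔤 is not unimodular. -/
import Mathlib


open Finset

/-- basis of the universal algebra of Killing fields of a tree-level q-map space:
`D`, `X^i`, `P_i` (`i = 0,…,n`, with `X_e = P 0`), `Z`, `V_a` (`a = 1,…,n`),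
`F = X_f`, `H = X_h`. -/
inductive QBasis (n : ℕ) : Type
  | D : QBasis n
  | X : Fin (n+1) → QBasis n
  | P : Fin (n+1) → QBasis n
  | Z : QBasis n
  | V : Fin n → QBasis n
  | F : QBasis n
  | H : QBasis n
  deriving DecidableEq, Fintype

noncomputable section

/-- basis vector (delta function). -/
def δb {n : ℕ} (b : QBasis n) : QBasis n → ℝ := fun e => if e = b then 1 else 0

/-- the structure constants: the bracket of two basis vectors, as listed in the
paper (all unlisted brackets are zero, and the listed ones are extended
antisymmetrically). -/
def qBra {n : ℕ} (k : Fin n → Fin n → Fin n → ℝ) :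
    QBasis n → QBasis n → (QBasis n → ℝ)
  | .P i, .X j => if i = j then (-2 : ℝ) • δb (.Z) else 0
  | .X j, .P i => if i = j then (2 : ℝ) • δb (.Z) else 0
  | .X i, .D => (1/2 : ℝ) • δb (.X i)
  | .D, .X i => (-(1/2) : ℝ) • δb (.X i)
  | .P i, .D => (1/2 : ℝ) • δb (.P i)
  | .D, .P i => (-(1/2) : ℝ) • δb (.P i)
  | .Z, .D => δb (.Z)
  | .D, .Z => -δb (.Z)
  | .P i, .F => Fin.cases (motive := fun _ => QBasis n → ℝ)
      (-δb (.H)) (fun a => -δb (.V a)) i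
  | .F, .P i => Fin.cases (motive := fun _ => QBasis n → ℝ)
      (δb (.H)) (fun a => δb (.V a)) i
  | .H, .P i => (if i = 0 then (-2 : ℝ) else (-1 : ℝ)) • δb (.P i)
  | .P i, .H => (if i = 0 then (2 : ℝ) else (1 : ℝ)) • δb (.P i)
  | .H, .F => (2 : ℝ) • δb (.F)
  | .F, .H => (-2 : ℝ) • δb (.F)
  | .P i, .V a => Fin.cases (motive := fun _ => QBasis n → ℝ)
      (δb (.P a.succ)) (fun b => -∑ c, k a b c • δb (.X c.succ)) i
  | .V a, .P i => Fin.cases (motive := fun _ => QBasis n → ℝ)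
      (-δb (.P a.succ)) (fun b => ∑ c, k a b c • δb (.X c.succ)) i
  | .V a, .X i => Fin.cases (motive := fun _ => QBasis n → ℝ)
      0 (fun b => if a = b then δb (.X 0) else 0) i
  | .X i, .V a => Fin.cases (motive := fun _ => QBasis n → ℝ)
      0 (fun b => if a = b then -δb (.X 0) else 0) i
  | .H, .V a => δb (.V a)
  | .V a, .H => -δb (.V a)
  | .D, .F => (1/2 : ℝ) • δb (.F)
  | .F, .D => (-(1/2) : ℝ) • δb (.F)
  | .Z, .F => (1/2 : ℝ) • δb (.X 0)
  | .F, .Z => (-(1/2) : ℝ) • δb (.X 0)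
  | .H, .X i => if i = 0 then δb (.X 0) else 0
  | .X i, .H => if i = 0 then -δb (.X 0) else 0
  | .Z, .H => δb (.Z)
  | .H, .Z => -δb (.Z)
  | _, _ => 0

/-- the bilinear extension of the structure constants to the whole
`(3n+6)`-dimensional space. -/
def qBracket {n : ℕ} (k : Fin n → Fin n → Fin n → ℝ)
    (x y : QBasis n → ℝ) : QBasis n → ℝ :=
  fun e => ∑ b : QBasis n, ∑ b' : QBasis n, x b * y b' * qBra k b b' e


/-- the element `D' = 4D - X_h`. -/
def Dprime {n : ℕ} : QBasis n → ℝ := (4 : ℝ) • δb (QBasis.D) - δb (QBasis.H)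

/-- the basis of the nilradical `𝔫 = span{V_a, Z, P_a, X^i}`, as a finset. -/
def nBasis (n : ℕ) : Finset (QBasis n) :=
  {QBasis.Z} ∪ Finset.image (fun a : Fin n => QBasis.V a) Finset.univ
    ∪ Finset.image (fun a : Fin n => QBasis.P a.succ) Finset.univ
    ∪ Finset.image (fun i : Fin (n+1) => QBasis.X i) Finset.univ


lemma qBracket_Dprime {n} (k : Fin n → Fin n → Fin n → ℝ) (c : QBasis n) :
    qBracket k Dprime (δb c) = fun e => 4 * qBra k .D c e - qBra k .H c e := by
  funext e
  unfold qBracket Dprime δb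
  simp [sub_mul, mul_ite, ite_mul, Finset.sum_sub_distrib, Finset.sum_ite_eq',
    Finset.sum_ite_eq]

/-- `D' = 4D - X_h` commutes with `X_e, X_f, X_h`, and `ad_{D'}`
acts on `𝔫` with eigenspaces `span{X⁰, Z}`, `span{Xᵃ}`, `span{V_a, P_a}` of
eigenvalues `-3, -2, -1`; hence `tr(ad_{D'}|_𝔫) = -4n-6 ≠ 0`, so the radical
`ℝD' ⋉ 𝔫` is not unimodular. -/
theorem stmt_6 {n : ℕ} (k : Fin n → Fin n → Fin n → ℝ)
    (hsymm : ∀ a b c, k a b c = k b a c ∧ k a b c = k a c b) :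
    qBracket k Dprime (δb (QBasis.P 0)) = 0 ∧
    qBracket k Dprime (δb (QBasis.F)) = 0 ∧
    qBracket k Dprime (δb (QBasis.H)) = 0 ∧
    qBracket k Dprime (δb (QBasis.X 0)) = (-3 : ℝ) • δb (QBasis.X 0) ∧
    qBracket k Dprime (δb (QBasis.Z)) = (-3 : ℝ) • δb (QBasis.Z) ∧
    (∀ a : Fin n,
      qBracket k Dprime (δb (QBasis.X a.succ)) = (-2 : ℝ) • δb (QBasis.X a.succ)) ∧
    (∀ a : Fin n, qBracket k Dprime (δb (QBasis.V a)) = -δb (QBasis.V a)) ∧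
    (∀ a : Fin n,
      qBracket k Dprime (δb (QBasis.P a.succ)) = -δb (QBasis.P a.succ)) ∧
    (∑ b ∈ nBasis n, qBracket k Dprime (δb b) b) = -(4 * (n : ℝ) + 6) ∧
    -(4 * (n : ℝ) + 6) ≠ 0 := by
  simp only [qBracket_Dprime]
  refine ⟨?_, ?_, ?_, ?_, ?_, ?_, ?_, ?_, ?_, by have : (0:ℝ) ≤ n := Nat.cast_nonneg n; intro h; linarith⟩
  · funext e; simp [qBra, δb]; split <;> norm_num
  · funext e; simp [qBra, δb]; split <;> norm_num
  · funext e; simp [qBra, δb]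
  · funext e; simp [qBra, δb]; split <;> norm_num
  · funext e; simp [qBra, δb]; split <;> norm_num
  · intro a; funext e; simp [qBra, δb, (Fin.succ_ne_zero a)]; split <;> norm_num
  · intro a; funext e; simp [qBra, δb]
  · intro a; funext e; simp [qBra, δb, (Fin.succ_ne_zero a)]; split <;> norm_num
  · rw [nBasis, Finset.sum_union, Finset.sum_union, Finset.sum_union,
      Finset.sum_singleton, Finset.sum_image (by intro x _ y _ h; simpa using h),
      Finset.sum_image (by intro x _ y _ h; simpa using h),
      Finset.sum_image (by intro x _ y _ h; simpa using h)]
    · simp [qBra, δb, ite_apply, Finset.sum_ite_eq',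
        Fin.succ_ne_zero, Finset.card_univ]
      ring
    · rw [Finset.disjoint_left]
      intro x hx hx2
      simp only [Finset.mem_image, Finset.mem_singleton, Finset.mem_univ,
        true_and] at hx hx2
      obtain ⟨a, rfl⟩ := hx2
      simp_all
    · rw [Finset.disjoint_left]
      intro x hx hx2
      simp only [Finset.mem_image, Finset.mem_union, Finset.mem_singleton,
        Finset.mem_univ, true_and] at hx hx2
      obtain ⟨a, rfl⟩ := hx2
      simp_all [Fin.succ_ne_zero]
    · rw [Finset.disjoint_left]
      intro x hx hx2
      simp only [Finset.mem_image, Finset.mem_union, Finset.mem_singleton,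
        Finset.mem_univ, true_and] at hx hx2
      obtain ⟨a, rfl⟩ := hx2
      simp_all


end
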